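/- Let T be θ-averaged with respect to ‖·‖_M (θ ∈ (0,1]) with infimal displacement vector v, S = (1/θ)(I - T), and z ∈ H. Then for the iterates z^{k+1} = (I - αθS)z^k with z⁰ = z: ‖S z - S z^k‖_M ≤ ‖S z - (1/θ)v‖_M + √(‖S z‖_M² - ‖(1/θ)v‖_M²) for every k. -/

import Mathlib

/-- The `M`-inner product induced by a positive definite self-adjoint operator `M`. -/
noncomputable def Minner {H : Type*} [NormedAddCommGroup H] [InnerProductSpace ℝ H]
    (M : H →L[ℝ] H) (x y : H) : ℝ := inner ℝ x (M y)

/-- The `M`-norm. -/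
noncomputable def Mnorm {H : Type*} [NormedAddCommGroup H] [InnerProductSpace ℝ H]
    (M : H →L[ℝ] H) (x : H) : ℝ := Real.sqrt (Minner M x x)

/-! Put `w = (1/θ) v`. Since `θ S x = x - T x` lies in the range of `I - T`, the variational
characterisation of `v` gives `⟨S x - w, w⟩_M ≥ 0`, hence `‖S zᵏ - w‖²_M ≤ ‖S zᵏ‖²_M - ‖w‖²_M`.
Cocoercivity makes `‖S zᵏ‖_M` nonincreasing for step sizes `αθ ≤ 1`, so the right side is at most
`‖S z‖²_M - ‖w‖²_M`, and the triangle inequality through `w` concludes. -/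

open ContinuousLinearMap

section MInner

variable {H : Type*} [NormedAddCommGroup H] [InnerProductSpace ℝ H] {M : H →L[ℝ] H}

def MCocoercive (M : H →L[ℝ] H) (β : ℝ) (S : H → H) : Prop :=
  ∀ x y, Minner M (S x - S y) (x - y) ≥ β * Mnorm M (S x - S y) ^ 2

noncomputable def Mform (M : H →L[ℝ] H) : LinearMap.BilinForm ℝ H :=
  (innerₗ H).compl₂ (M : H →ₗ[ℝ] H)

lemma Mform_apply (x y : H) : Mform M x y = Minner M x y := rfl

lemma Minner_comm (hM : M.IsPositive) (x y : H) : Minner M x y = Minner M y x := by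
  rw [Minner, Minner, ← hM.inner_left_eq_inner_right, real_inner_comm]

lemma Mform_isSymm (hM : M.IsPositive) : LinearMap.IsSymm (Mform M) :=
  LinearMap.isSymm_def.mpr fun x y => Minner_comm hM x y

lemma Minner_self_nonneg (hM : M.IsPositive) (x : H) : 0 ≤ Minner M x x :=
  hM.inner_nonneg_right x

lemma Minner_smul_left (c : ℝ) (x y : H) : Minner M (c • x) y = c * Minner M x y :=
  real_inner_smul_left x (M y) c

lemma Minner_smul_right (c : ℝ) (x y : H) : Minner M x (c • y) = c * Minner M x y := by
  rw [Minner, map_smul, real_inner_smul_right, Minner]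

lemma Minner_sub_left (x y z : H) : Minner M (x - y) z = Minner M x z - Minner M y z :=
  inner_sub_left x y (M z)

lemma Minner_add_add_self (hM : M.IsPositive) (x y : H) :
    Minner M (x + y) (x + y) = Minner M x x + 2 * Minner M x y + Minner M y y := by
  simp only [← Mform_apply, map_add, LinearMap.add_apply]
  simp only [Mform_apply, Minner_comm hM y x]
  ring

lemma Minner_sub_sub_self (hM : M.IsPositive) (x y : H) :
    Minner M (x - y) (x - y) = Minner M x x - 2 * Minner M x y + Minner M y y := by
  simp only [← Mform_apply, map_sub, LinearMap.sub_apply]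
  simp only [Mform_apply, Minner_comm hM y x]
  ring

lemma Mnorm_nonneg (x : H) : 0 ≤ Mnorm M x := Real.sqrt_nonneg _

lemma Mnorm_sq (hM : M.IsPositive) (x : H) : Mnorm M x ^ 2 = Minner M x x :=
  Real.sq_sqrt (Minner_self_nonneg hM x)

lemma Mnorm_sub_comm (x y : H) : Mnorm M (x - y) = Mnorm M (y - x) := by
  rw [← neg_sub, Mnorm, Mnorm, Minner, Minner, map_neg, inner_neg_neg]

lemma Minner_le_Mnorm_mul_Mnorm (hM : M.IsPositive) (x y : H) :
    Minner M x y ≤ Mnorm M x * Mnorm M y := by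
  rw [Mnorm, Mnorm, ← Real.sqrt_mul (Minner_self_nonneg hM x)]
  exact Real.le_sqrt_of_sq_le
    ((Mform M).apply_sq_le_of_symm (Minner_self_nonneg hM) (Mform_isSymm hM) x y)

lemma Mnorm_add_le (hM : M.IsPositive) (x y : H) :
    Mnorm M (x + y) ≤ Mnorm M x + Mnorm M y := by
  refine Real.sqrt_le_iff.mpr ⟨add_nonneg (Mnorm_nonneg x) (Mnorm_nonneg y), ?_⟩
  rw [Minner_add_add_self hM, add_sq, Mnorm_sq hM, Mnorm_sq hM]
  linarith [Minner_le_Mnorm_mul_Mnorm hM x y]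

lemma Minner_sub_self_le_of_nonneg (hM : M.IsPositive) {y w : H}
    (h : 0 ≤ Minner M (y - w) w) :
    Minner M (y - w) (y - w) ≤ Minner M y y - Minner M w w := by
  rw [Minner_sub_left] at h
  rw [Minner_sub_sub_self hM]
  linarith

lemma Minner_self_apply_step_le (hM : M.IsPositive) {β t : ℝ} {S : H → H}
    (hS : MCocoercive M β S) (ht : 0 < t) (htβ : t ≤ 2 * β) (x : H) :
    Minner M (S (x - t • S x)) (S (x - t • S x)) ≤ Minner M (S x) (S x) := by
  set u := S (x - t • S x) - S x
  have hcoco : β * Minner M u u ≤ -t * Minner M u (S x) := by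
    have := hS (x - t • S x) x
    rwa [sub_sub_cancel_left, ← neg_smul, Minner_smul_right, Mnorm_sq hM] at this
  have hexp := Minner_add_add_self hM (S x) u
  rw [add_sub_cancel, Minner_comm hM (S x) u] at hexp
  nlinarith [Minner_self_nonneg hM u]

lemma antitone_Minner_self_apply_iterate (hM : M.IsPositive) {β t : ℝ} {S : H → H}
    (hS : MCocoercive M β S) (ht : 0 < t) (htβ : t ≤ 2 * β) {z : ℕ → H}
    (hz : ∀ k, z (k + 1) = z k - t • S (z k)) :
    Antitone fun k => Minner M (S (z k)) (S (z k)) :=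
  antitone_nat_of_succ_le fun k => by
    simpa only [hz k] using Minner_self_apply_step_le hM hS ht htβ (z k)

end MInner

theorem stmt16_general {H : Type*} [NormedAddCommGroup H] [InnerProductSpace ℝ H]
    (M : H →L[ℝ] H)
    (hMsym : ∀ x y : H, (inner ℝ (M x) y : ℝ) = inner ℝ x (M y))
    (hMpos : ∀ x : H, x ≠ 0 → 0 < (inner ℝ x (M x) : ℝ))
    (θ α : ℝ) (hθ : θ ∈ Set.Ioc (0 : ℝ) 1) (hα : α ∈ Set.Ioc (0 : ℝ) 1)
    (T S : H → H) (hS : ∀ x, S x = (1 / θ) • (x - T x))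
    (hcoco : ∀ x y, Minner M (S x - S y) (x - y) ≥ (1 / 2) * (Mnorm M (S x - S y)) ^ 2)
    (v : H)
    (hv_char : ∀ y ∈ Set.range (fun x => x - T x), Minner M (y - v) v ≥ 0)
    (z0 : H) (z : ℕ → H) (hz0 : z 0 = z0)
    (hzstep : ∀ k, z (k + 1) = z k - (α * θ) • S (z k)) :
    ∀ k : ℕ, Mnorm M (S z0 - S (z k)) ≤ Mnorm M (S z0 - (1 / θ) • v)
      + Real.sqrt ((Mnorm M (S z0)) ^ 2 - (Mnorm M ((1 / θ) • v)) ^ 2) := by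
  intro k
  have hM : M.IsPositive := (isPositive_iff M).mpr ⟨hMsym, fun x => by
    rcases eq_or_ne x 0 with rfl | hx
    · simp
    · exact (real_inner_comm x (M x)).ge.trans' (hMpos x hx).le⟩
  set w := (1 / θ) • v
  have hobtuse : 0 ≤ Minner M (S (z k) - w) w := by
    rw [hS, ← smul_sub, Minner_smul_left, Minner_smul_right, ← mul_assoc]
    exact mul_nonneg (mul_self_nonneg _) (hv_char _ ⟨z k, rfl⟩)
  have hdecr : Minner M (S (z k)) (S (z k)) ≤ Minner M (S z0) (S z0) := by
    rw [← hz0]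
    refine antitone_Minner_self_apply_iterate hM hcoco (mul_pos hα.1 hθ.1) ?_ hzstep
      (Nat.zero_le k)
    linarith [mul_le_one₀ hα.2 hθ.1.le hθ.2]
  have hdist : Mnorm M (w - S (z k)) ≤ √(Mnorm M (S z0) ^ 2 - Mnorm M w ^ 2) := by
    rw [Mnorm_sub_comm, Mnorm_sq hM, Mnorm_sq hM]
    exact Real.sqrt_le_sqrt ((Minner_sub_self_le_of_nonneg hM hobtuse).trans (by linarith))
  calc Mnorm M (S z0 - S (z k)) = Mnorm M ((S z0 - w) + (w - S (z k))) := by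
        rw [sub_add_sub_cancel]
    _ ≤ Mnorm M (S z0 - w) + Mnorm M (w - S (z k)) := Mnorm_add_le hM _ _
    _ ≤ _ := by gcongr

/-- Uniform bound `‖S z - S zᵏ‖_M ≤ ‖S z - (1/θ)v‖_M + √(‖S z‖_M² - ‖(1/θ)v‖_M²)`
along the averaged iteration `zᵏ⁺¹ = zᵏ - αθ S zᵏ` with `z⁰ = z`. -/
theorem stmt16 {H : Type*} [NormedAddCommGroup H] [InnerProductSpace ℝ H]
    (M : H →L[ℝ] H)
    (hMsym : ∀ x y : H, (inner ℝ (M x) y : ℝ) = inner ℝ x (M y))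
    (hMpos : ∀ x : H, x ≠ 0 → 0 < (inner ℝ x (M x) : ℝ))
    (θ α : ℝ) (hθ : θ ∈ Set.Ioc (0 : ℝ) 1) (hα : α ∈ Set.Ioc (0 : ℝ) 1)
    (T S : H → H) (hS : ∀ x, S x = (1 / θ) • (x - T x))
    (hcoco : ∀ x y, Minner M (S x - S y) (x - y) ≥ (1 / 2) * (Mnorm M (S x - S y)) ^ 2)
    (v : H)
    (hv_mem : v ∈ closure (Set.range fun x => x - T x))
    (hv_min : ∀ w ∈ closure (Set.range fun x => x - T x), Mnorm M v ≤ Mnorm M w)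
    (hv_char : ∀ y ∈ Set.range (fun x => x - T x), Minner M (y - v) v ≥ 0)
    (z0 : H) (z : ℕ → H) (hz0 : z 0 = z0)
    (hzstep : ∀ k, z (k + 1) = z k - (α * θ) • S (z k)) :
    ∀ k : ℕ, Mnorm M (S z0 - S (z k)) ≤ Mnorm M (S z0 - (1 / θ) • v)
      + Real.sqrt ((Mnorm M (S z0)) ^ 2 - (Mnorm M ((1 / θ) • v)) ^ 2) :=
  stmt16_general M hMsym hMpos θ α hθ hα T S hS hcoco v hv_char z0 z hz0 hzstep
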